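/- Let R be a DBW-refuter for L ⊆ Σ^ω with n states. Then there exists a certificate (x, x₁, x₂) for non-DBW-recognizability of L with |x| + |x₁| + |x₂| ≤ 2·n. -/

import Mathlib

/-- An (A/α)-transducer: reads letters of `A`, outputs letters of `α`. -/
structure Transducer (A α : Type) where
  S : Type
  [fin : Fintype S]
  init : S
  ρ : S → A → S
  τ : S → α

attribute [instance] Transducer.fin

def Transducer.run {A α : Type} (T : Transducer A α) (y : ℕ → A) : ℕ → T.S
  | 0 => T.init
  | n + 1 => T.ρ (T.run y n) (y n)

/-- Output with environment initiation: output letter `j` is emitted at state `s_{j+1}`. -/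
def Transducer.out {A α : Type} (T : Transducer A α) (y : ℕ → A) : ℕ → α :=
  fun j => T.τ (T.run y (j + 1))

/-- A DBW-refuter for `L`: a ({acc,rej}/Σ)-transducer (with `true` = acc, `false` = rej)
such that for every input `y`, the output is in `L` iff `y` has only finitely many acc's. -/
def DBWRefuter {α : Type} (L : Set (ℕ → α)) (R : Transducer Bool α) : Prop :=
  ∀ y : ℕ → Bool, R.out y ∈ L ↔ {j | y j = true}.Finite

/-- `u` is a prefix of the infinite word `w`. -/
def HasPrefixWord {α : Type} (w : ℕ → α) (u : List α) : Prop :=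
  ∀ i : Fin u.length, w i.1 = u.get i

/-- The ω-language `x·(x₁+x₂)*·x₁^ω`. -/
def LangA {α : Type} (x x₁ x₂ : List α) : Set (ℕ → α) :=
  { w | ∃ ws : List (List α), (∀ u ∈ ws, u = x₁ ∨ u = x₂) ∧
        ∀ n, HasPrefixWord w (x ++ ws.flatten ++ (List.replicate n x₁).flatten) }

/-- The ω-language `x·(x₁*·x₂)^ω`. -/
def LangB {α : Type} (x x₁ x₂ : List α) : Set (ℕ → α) :=
  { w | ∃ j : ℕ → ℕ, ∀ n, HasPrefixWord w
        (x ++ ((List.range n).map (fun i => (List.replicate (j i) x₁).flatten ++ x₂)).flatten) }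

/-!
Pick a bottom strongly connected component `B` of the refuter's state graph and reach it by a
shortest path, of length at most `n - |B|`. Inside `B` the all-`rej` run from the entry state
cycles within `|B|` steps, which yields a state `s` with a `rej`-cycle; as `B` is strongly
connected, after reading `acc` at `s` one returns to `s` within `|B| - 1` further steps. The
outputs along the path to `s`, the `rej`-cycle and the `acc`-cycle form the certificate: every
word of `x·(x₁+x₂)*·x₁^ω` is the refuter's output on an input with finitely many `acc`s, hence in
`L`, and every word of `x·(x₁*·x₂)^ω` is its output on an input with infinitely many `acc`s.
-/

open List

namespace Transducer

variable {A α : Type} (T : Transducer A α)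

def evalFrom (s : T.S) (w : List A) : T.S := w.foldl T.ρ s

@[simp] lemma evalFrom_nil (s : T.S) : T.evalFrom s [] = s := rfl

@[simp] lemma evalFrom_cons (s : T.S) (a : A) (w : List A) :
    T.evalFrom s (a :: w) = T.evalFrom (T.ρ s a) w := rfl

@[simp] lemma evalFrom_append (s : T.S) (v w : List A) :
    T.evalFrom s (v ++ w) = T.evalFrom (T.evalFrom s v) w := foldl_append ..

lemma evalFrom_flatten_of_loops {s : T.S} {vs : List (List A)}
    (h : ∀ v ∈ vs, T.evalFrom s v = s) : T.evalFrom s vs.flatten = s := by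
  induction vs with
  | nil => rfl
  | cons v vs ih => simp_all

def outFrom : T.S → List A → List α
  | _, [] => []
  | s, a :: w => T.τ (T.ρ s a) :: outFrom (T.ρ s a) w

@[simp] lemma outFrom_nil (s : T.S) : T.outFrom s [] = [] := rfl

@[simp] lemma outFrom_cons (s : T.S) (a : A) (w : List A) :
    T.outFrom s (a :: w) = T.τ (T.ρ s a) :: T.outFrom (T.ρ s a) w := rfl

@[simp] lemma length_outFrom (s : T.S) (w : List A) : (T.outFrom s w).length = w.length := by
  induction w generalizing s <;> simp [*]

@[simp] lemma outFrom_append (s : T.S) (v w : List A) :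
    T.outFrom s (v ++ w) = T.outFrom s v ++ T.outFrom (T.evalFrom s v) w := by
  induction v generalizing s <;> simp [*]

lemma getElem_outFrom (s : T.S) (w : List A) {i : ℕ} (hi : i < (T.outFrom s w).length) :
    (T.outFrom s w)[i] = T.τ (T.evalFrom s (w.take (i + 1))) := by
  induction w generalizing s i with
  | nil => simp at hi
  | cons a w ih => cases i <;> simp [ih]

lemma outFrom_flatten_of_loops {s : T.S} {vs : List (List A)}
    (h : ∀ v ∈ vs, T.evalFrom s v = s) :
    T.outFrom s vs.flatten = (vs.map (T.outFrom s)).flatten := by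
  induction vs with
  | nil => rfl
  | cons v vs ih => simp_all

lemma evalFrom_flatten_replicate {s : T.S} {v : List A} (h : T.evalFrom s v = s) (n : ℕ) :
    T.evalFrom s (replicate n v).flatten = s :=
  T.evalFrom_flatten_of_loops fun _ hv => eq_of_mem_replicate hv ▸ h

lemma outFrom_flatten_replicate {s : T.S} {v : List A} (h : T.evalFrom s v = s) (n : ℕ) :
    T.outFrom s (replicate n v).flatten = (replicate n (T.outFrom s v)).flatten := by
  rw [T.outFrom_flatten_of_loops fun _ hv => eq_of_mem_replicate hv ▸ h, map_replicate]

lemma exists_loop_outFrom_eq_flatten {s : T.S} {us : List (List α)}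
    (h : ∀ u ∈ us, ∃ v, T.evalFrom s v = s ∧ T.outFrom s v = u) :
    ∃ v, T.evalFrom s v = s ∧ T.outFrom s v = us.flatten := by
  induction us with
  | nil => exact ⟨[], rfl, rfl⟩
  | cons u us ih =>
    obtain ⟨v, hv, rfl⟩ := h u mem_cons_self
    obtain ⟨v', hv', hout⟩ := ih fun u' hu' => h u' (mem_cons_of_mem _ hu')
    exact ⟨v ++ v', by simp [hv, hv'], by simp [hv, hout]⟩

lemma evalFrom_mem_of_closed {C : Set T.S} (hC : ∀ q ∈ C, ∀ a, T.ρ q a ∈ C) {p : T.S}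
    (hp : p ∈ C) (w : List A) : T.evalFrom p w ∈ C := by
  induction w generalizing p with
  | nil => exact hp
  | cons a w ih => exact ih (hC p hp a)

lemma range_evalFrom_evalFrom_subset (p : T.S) (w : List A) :
    Set.range (T.evalFrom (T.evalFrom p w)) ⊆ Set.range (T.evalFrom p) := by
  rintro _ ⟨w', rfl⟩
  exact ⟨w ++ w', evalFrom_append ..⟩

/-- A shortest word leading from `p` into `X` visits pairwise distinct states of `C \ X`
before its last letter. -/
lemma exists_evalFrom_mem_length_le {C X : Set T.S} (hC : ∀ q ∈ C, ∀ a, T.ρ q a ∈ C) {p : T.S}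
    (hp : p ∈ C) (h : ∃ w, T.evalFrom p w ∈ X) :
    ∃ w, T.evalFrom p w ∈ X ∧ w.length ≤ (C \ X).ncard := by
  obtain ⟨w, hw, hmin⟩ : ∃ w, T.evalFrom p w ∈ X ∧
      ∀ w', T.evalFrom p w' ∈ X → w.length ≤ w'.length :=
    ⟨_, Function.argminOn_mem length {w | T.evalFrom p w ∈ X} h,
      fun w' hw' => not_lt.1 (Function.not_lt_argminOn length {w | T.evalFrom p w ∈ X}
        (a := w') hw')⟩
  refine ⟨w, hw, Set.le_ncard_of_inj_on_range (fun i => T.evalFrom p (w.take i))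
    (fun i hi => ⟨T.evalFrom_mem_of_closed hC hp _, fun hX => ?_⟩) fun i hi i' hi' heq => ?_⟩
  · have := hmin _ hX
    simp only [length_take] at this
    omega
  · by_contra hne
    wlog hlt : i < i' generalizing i i'
    · exact this i' hi' i hi heq.symm (Ne.symm hne) (by omega)
    have := hmin (w.take i ++ w.drop i') (by
      rw [evalFrom_append, heq, ← evalFrom_append, take_append_drop]
      exact hw)
    simp only [length_append, length_take, length_drop] at this
    omega

lemma exists_reachable_bottom : ∃ b ∈ Set.range (T.evalFrom T.init),
    ∀ q ∈ Set.range (T.evalFrom b), b ∈ Set.range (T.evalFrom q) := by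
  obtain ⟨b, ⟨w₀, rfl⟩, hmin⟩ := Set.exists_min_image (Set.range (T.evalFrom T.init))
    (fun q => (Set.range (T.evalFrom q)).ncard) (Set.toFinite _) ⟨_, [], rfl⟩
  refine ⟨_, ⟨w₀, rfl⟩, ?_⟩
  rintro _ ⟨w, rfl⟩
  have hsub := T.range_evalFrom_evalFrom_subset (T.evalFrom T.init w₀) w
  rw [Set.eq_of_subset_of_ncard_le hsub
    (hmin _ (T.range_evalFrom_evalFrom_subset T.init w₀ ⟨w, rfl⟩))]
  exact ⟨[], rfl⟩

lemma exists_replicate_loop {C : Set T.S} (hC : ∀ q ∈ C, ∀ a, T.ρ q a ∈ C) {q : T.S}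
    (hq : q ∈ C) (a : A) : ∃ i c, c ≠ 0 ∧ i + c ≤ C.ncard ∧
      T.evalFrom (T.evalFrom q (replicate i a)) (replicate c a) = T.evalFrom q (replicate i a) := by
  obtain ⟨i, hi, j, hj, hne, heq⟩ := Set.exists_ne_map_eq_of_ncard_lt_of_maps_to
    (s := (Finset.range (C.ncard + 1) : Set ℕ)) (by simp)
    (f := fun i => T.evalFrom q (replicate i a)) fun i _ => T.evalFrom_mem_of_closed hC hq _
  wlog hij : i < j generalizing i j
  · exact this j hj i hi hne.symm heq.symm (by omega)
  simp only [Finset.coe_range, Set.mem_Iio] at hj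
  refine ⟨i, j - i, by omega, by omega, ?_⟩
  rw [← evalFrom_append, ← replicate_add, Nat.add_sub_cancel' hij.le]
  exact heq.symm

theorem exists_lasso (a b : A) : ∃ (s : T.S) (u : List A) (c : ℕ) (v : List A),
    T.evalFrom T.init u = s ∧ c ≠ 0 ∧ T.evalFrom s (replicate c a) = s ∧
      T.evalFrom s (b :: v) = s ∧ u.length + c + (v.length + 1) ≤ 2 * Fintype.card T.S := by
  obtain ⟨_, ⟨w₀, rfl⟩, hbot⟩ := T.exists_reachable_bottom
  set B := Set.range (T.evalFrom (T.evalFrom T.init w₀))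
  have hB : ∀ q ∈ B, ∀ a, T.ρ q a ∈ B := by
    rintro _ ⟨w, rfl⟩ a
    exact ⟨w ++ [a], by simp⟩
  obtain ⟨u₀, hu₀B, hu₀⟩ := T.exists_evalFrom_mem_length_le (C := Set.univ) (X := B)
    (fun _ _ _ => Set.mem_univ _) (Set.mem_univ _) ⟨w₀, [], rfl⟩
  obtain ⟨i, c, hc, hic, hloop⟩ := T.exists_replicate_loop hB hu₀B a
  set s := T.evalFrom (T.evalFrom T.init u₀) (replicate i a)
  have hsB : s ∈ B := T.evalFrom_mem_of_closed hB hu₀B _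
  obtain ⟨v, hv, hvlen⟩ := T.exists_evalFrom_mem_length_le hB (hB s hsB b) (X := {s}) (by
    obtain ⟨w₁, hw₁⟩ := hbot _ (hB s hsB b)
    obtain ⟨w₂, hw₂⟩ := hsB
    exact ⟨w₁ ++ w₂, by simp [hw₁, hw₂]⟩)
  refine ⟨s, u₀ ++ replicate i a, c, v, by simp [s], hc, hloop, by simpa using hv, ?_⟩
  have hcompl : (Set.univ \ B).ncard = Fintype.card T.S - B.ncard := by
    rw [Set.ncard_sdiff (Set.subset_univ _), Set.ncard_univ, Nat.card_eq_fintype_card]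
  have hBcard : B.ncard ≤ Fintype.card T.S :=
    Nat.card_eq_fintype_card (α := T.S) ▸ B.ncard_le_card
  have hBpos : 0 < B.ncard := (Set.ncard_pos).2 ⟨s, hsB⟩
  rw [Set.ncard_sdiff_singleton_of_mem hsB] at hvlen
  simp only [length_append, length_replicate]
  omega

end Transducer

section HasPrefixWord

variable {α : Type} {w w' : ℕ → α} {u v : List α}

lemma HasPrefixWord.apply_eq (h : HasPrefixWord w u) {i : ℕ} (hi : i < u.length) :
    w i = u[i] := h ⟨i, hi⟩

lemma HasPrefixWord.exists_ge_apply_eq_of_mem (h : HasPrefixWord w (u ++ v)) {a : α}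
    (ha : a ∈ v) : ∃ k, u.length ≤ k ∧ w k = a := by
  obtain ⟨i, hi, rfl⟩ := getElem_of_mem ha
  exact ⟨u.length + i, by omega, by simp [h.apply_eq (i := u.length + i) (by simp [hi])]⟩

lemma hasPrefixWord_getD_append_replicate (u : List α) (d : α) (m : ℕ) :
    HasPrefixWord (fun k => u.getD k d) (u ++ replicate m d) := fun ⟨i, hi⟩ => by
  rcases lt_or_ge i u.length with h | h
  · simp [getElem_append_left h, getElem?_eq_getElem h]
  · simp [getElem_append_right h, getElem?_eq_none h]

lemma eq_of_forall_hasPrefixWord {P : ℕ → List α} (hw : ∀ n, HasPrefixWord w (P n))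
    (hw' : ∀ n, HasPrefixWord w' (P n)) (hP : ∀ n, n ≤ (P n).length) : w = w' := by
  funext k
  rw [(hw (k + 1)).apply_eq (hP _), (hw' (k + 1)).apply_eq (hP _)]

-- The common extension of a prefix chain `P` with `n ≤ |P n|`.
def prefixLimit [Inhabited α] (P : ℕ → List α) : ℕ → α := fun k => (P (k + 1)).getD k default

lemma hasPrefixWord_prefixLimit [Inhabited α] {P : ℕ → List α} (hP : ∀ n, P n <+: P (n + 1))
    (hlen : ∀ n, n ≤ (P n).length) (n : ℕ) : HasPrefixWord (prefixLimit P) (P n) := by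
  have mono : ∀ {m m'}, m ≤ m' → P m <+: P m' := fun h =>
    Nat.le_induction prefix_rfl (fun _ _ ih => ih.trans (hP _)) _ h
  rintro ⟨i, hi⟩
  have hi' : i < (P (i + 1)).length := hlen (i + 1)
  simp only [prefixLimit, get_eq_getElem, getD_eq_getElem _ _ hi']
  rcases le_total n (i + 1) with h | h
  · exact ((mono h).getElem hi).symm
  · exact (mono h).getElem hi'

end HasPrefixWord

lemma Transducer.hasPrefixWord_out {A α : Type} (T : Transducer A α) {y : ℕ → A} {u : List A}
    (hy : HasPrefixWord y u) : HasPrefixWord (T.out y) (T.outFrom T.init u) := by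
  have run_eq : ∀ k ≤ u.length, T.run y k = T.evalFrom T.init (u.take k) := by
    intro k hk
    induction k with
    | zero => rfl
    | succ k ih =>
      rw [take_add_one, getElem?_eq_getElem (by omega), Option.toList_some, T.evalFrom_append,
        ← ih (by omega), ← hy.apply_eq (by omega)]
      rfl
  rintro ⟨i, hi⟩
  rw [length_outFrom] at hi
  simp only [get_eq_getElem, getElem_outFrom, Transducer.out, run_eq (i + 1) hi]

namespace DBWRefuter

variable {Sig : Type} {L : Set (ℕ → Sig)} {R : Transducer Bool Sig}

theorem langA_subset (hR : DBWRefuter L R) {s : R.S} {u v : List Bool} {c : ℕ} (hc : c ≠ 0)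
    (hu : R.evalFrom R.init u = s) (hrej : R.evalFrom s (replicate c false) = s)
    (hv : R.evalFrom s v = s) :
    LangA (R.outFrom R.init u) (R.outFrom s (replicate c false)) (R.outFrom s v) ⊆ L := by
  rintro w ⟨ws, hws, hw⟩
  obtain ⟨z, hz, hzout⟩ := R.exists_loop_outFrom_eq_flatten (us := ws) fun x hx => by
    rcases hws x hx with rfl | rfl
    exacts [⟨_, hrej, rfl⟩, ⟨v, hv, rfl⟩]
  -- the input `u z (false^c)^ω`, which has only finitely many `true`s
  set y : ℕ → Bool := fun k => (u ++ z).getD k false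
  have hout : ∀ n, R.outFrom R.init (u ++ z ++ (replicate n (replicate c false)).flatten) =
      R.outFrom R.init u ++ ws.flatten ++ (replicate n (R.outFrom s (replicate c false))).flatten :=
    fun n => by
      rw [R.outFrom_append, R.evalFrom_append, R.outFrom_append, hu, hz, hzout,
        R.outFrom_flatten_replicate hrej]
  have hy : ∀ n, HasPrefixWord (R.out y)
      (R.outFrom R.init (u ++ z ++ (replicate n (replicate c false)).flatten)) := fun n => by
    rw [flatten_replicate_replicate]
    exact R.hasPrefixWord_out (hasPrefixWord_getD_append_replicate _ _ _)
  have hwy : w = R.out y := eq_of_forall_hasPrefixWord (fun n => hout n ▸ hw n) hy fun n => by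
    have := Nat.le_mul_of_pos_right n (Nat.pos_of_ne_zero hc)
    simp only [Transducer.length_outFrom, flatten_replicate_replicate, length_append,
      length_replicate]
    omega
  rw [hwy, hR]
  refine (Set.finite_Iio (u ++ z).length).subset fun k hk => ?_
  by_contra hge
  simp [y, getElem?_eq_none (not_lt.1 hge)] at hk

theorem langB_inter_eq_empty (hR : DBWRefuter L R) {s : R.S} {u v₁ v₂ : List Bool}
    (hu : R.evalFrom R.init u = s) (hv₁ : R.evalFrom s v₁ = s) (hv₂ : R.evalFrom s v₂ = s)
    (hacc : true ∈ v₂) :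
    LangB (R.outFrom R.init u) (R.outFrom s v₁) (R.outFrom s v₂) ∩ L = ∅ := by
  refine Set.eq_empty_of_forall_notMem fun w ⟨⟨j, hw⟩, hwL⟩ => ?_
  set blk : ℕ → List Bool := fun i => (replicate (j i) v₁).flatten ++ v₂
  set P : ℕ → List Bool := fun n => u ++ ((range n).map blk).flatten
  have hblk : ∀ i, R.evalFrom s (blk i) = s := fun i => by
    simp [blk, R.evalFrom_flatten_replicate hv₁, hv₂]
  have hP : ∀ n, P (n + 1) = P n ++ blk n := fun n => by simp [P, range_succ]
  have hPlen : ∀ n, n ≤ (P n).length := fun n => by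
    induction n with
    | zero => exact Nat.zero_le _
    | succ n ih =>
      have : 0 < (blk n).length := length_pos_of_mem (mem_append_right _ hacc)
      rw [hP, length_append]
      omega
  have hy := hasPrefixWord_prefixLimit (fun n => (hP n).symm ▸ prefix_append _ _) hPlen
  have hout : ∀ n, R.outFrom R.init (P n) = R.outFrom R.init u ++ ((range n).map
      fun i => (replicate (j i) (R.outFrom s v₁)).flatten ++ R.outFrom s v₂).flatten := fun n => by
      rw [R.outFrom_append, hu, R.outFrom_flatten_of_loops (by simp [hblk]), map_map]
      congr 3
      funext i
      simp only [blk, Function.comp_apply, R.outFrom_append, R.evalFrom_flatten_replicate hv₁,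
        R.outFrom_flatten_replicate hv₁]
  have hwy : w = R.out (prefixLimit P) := eq_of_forall_hasPrefixWord (fun n => hout n ▸ hw n)
    (fun n => R.hasPrefixWord_out (hy n)) fun n => by simpa using hPlen n
  refine Set.infinite_of_forall_exists_gt (fun a => ?_) ((hR _).1 (hwy ▸ hwL))
  obtain ⟨k, hk, hyk⟩ := (hP (a + 1) ▸ hy (a + 2)).exists_ge_apply_eq_of_mem
    (mem_append_right _ hacc)
  exact ⟨k, hyk, by have := hPlen (a + 1); omega⟩

end DBWRefuter

theorem stmt_7_general {Sig : Type} (L : Set (ℕ → Sig))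
    (R : Transducer Bool Sig) (hR : DBWRefuter L R) :
    ∃ x x₁ x₂ : List Sig, x₁ ≠ [] ∧ x₂ ≠ [] ∧
      LangA x x₁ x₂ ⊆ L ∧ LangB x x₁ x₂ ∩ L = ∅ ∧
      x.length + x₁.length + x₂.length ≤ 2 * Fintype.card R.S := by
  obtain ⟨s, u, c, v, hu, hc, hrej, hacc, hlen⟩ := R.exists_lasso false true
  refine ⟨R.outFrom R.init u, R.outFrom s (replicate c false), R.outFrom s (true :: v),
    fun h => hc (by simpa using congrArg length h), by simp, hR.langA_subset hc hu hrej hacc,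
    hR.langB_inter_eq_empty hu hrej hacc mem_cons_self, by simpa using hlen⟩

/-- A DBW-refuter for `L` with `n` states yields a certificate `(x, x₁, x₂)` for
non-DBW-recognizability of `L` with `|x| + |x₁| + |x₂| ≤ 2n`. -/
theorem stmt_7 {Sig : Type} [Fintype Sig] (L : Set (ℕ → Sig))
    (R : Transducer Bool Sig) (hR : DBWRefuter L R) :
    ∃ x x₁ x₂ : List Sig, x₁ ≠ [] ∧ x₂ ≠ [] ∧
      LangA x x₁ x₂ ⊆ L ∧ LangB x x₁ x₂ ∩ L = ∅ ∧
      x.length + x₁.length + x₂.length ≤ 2 * Fintype.card R.S :=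
  stmt_7_general L R hR
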